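/- arXiv:1712.04417 — 2 statements merged into one kernel-verified Lean document; each statement's English description precedes it below -/
import Mathlib

section
/- Correctness of the verification equation for a single file: Let G, G_T be commutative groups, e : G × G → G_T a map that is multiplicative in each argument and satisfies e(u^a, v) = e(u, v^a) for all integers a. Let g ∈ G, x an integer, v = g^x, α ∈ G, and for j in a finite set Q let h_j ∈ G, m_j, ν_j integers, σ_j = (h_j·α^{m_j})^x, σ = ∏_j σ_j^{ν_j}, μ = ∑_j ν_j·m_j. Then e(σ, g) = e(∏_{j∈Q} h_j^{ν_j} · α^μ, v). -/
/-!
Pairing is multiplicative in its first argument, so `e σ g` splits into the factors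
`e (σⱼ ^ νⱼ) g = e ((hⱼ * α ^ mⱼ) ^ x) g ^ νⱼ`; moving the exponent `x` across the pairing turns `g`
into `v`, and collecting the factors back gives `e (∏ⱼ (hⱼ * α ^ mⱼ) ^ νⱼ) v`. The first argument
then regroups in the commutative group `G` as `(∏ⱼ hⱼ ^ νⱼ) * α ^ μ`.
-/

open Finset

theorem zpow_sum {G ι : Type*} [CommGroup G] (a : G) (s : Finset ι) (f : ι → ℤ) :
    a ^ (∑ i ∈ s, f i) = ∏ i ∈ s, a ^ f i := by
  classical
  induction s using Finset.induction with
  | empty => simp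
  | insert i s hi ih => rw [sum_insert hi, prod_insert hi, zpow_add, ih]

theorem prod_mul_zpow_zpow {G ι : Type*} [CommGroup G] (s : Finset ι) (h : ι → G) (a : G)
    (m ν : ι → ℤ) :
    ∏ j ∈ s, (h j * a ^ m j) ^ ν j = (∏ j ∈ s, h j ^ ν j) * a ^ ∑ j ∈ s, ν j * m j := by
  simp only [mul_zpow, prod_mul_distrib, zpow_sum, ← zpow_mul, mul_comm (m _)]

def pairingLeftHom {G GT : Type*} [MulOneClass G] [Group GT] (e : G → G → GT)
    (hleft : ∀ u u' w : G, e (u * u') w = e u w * e u' w) (w : G) : G →* GT :=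
  MonoidHom.mk' (fun u => e u w) fun u u' => hleft u u' w

section Pairing

variable {G GT : Type*} [CommGroup G] [CommGroup GT] (e : G → G → GT)
  (hleft : ∀ u u' w : G, e (u * u') w = e u w * e u' w)
include hleft

theorem pairing_prod_left {ι : Type*} (s : Finset ι) (u : ι → G) (w : G) :
    e (∏ j ∈ s, u j) w = ∏ j ∈ s, e (u j) w :=
  map_prod (pairingLeftHom e hleft w) u s

theorem pairing_zpow_left (u w : G) (a : ℤ) : e (u ^ a) w = e u w ^ a :=
  map_zpow (pairingLeftHom e hleft w) u a

end Pairing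

theorem verification_correct_general {G GT : Type*} [CommGroup G] [CommGroup GT]
    (e : G → G → GT)
    (hleft : ∀ u u' w : G, e (u * u') w = e u w * e u' w)
    (hpow : ∀ (u w : G) (a : ℤ), e (u ^ a) w = e u (w ^ a))
    {ι : Type*} (Q : Finset ι) (g : G) (x : ℤ) (v : G) (hv : v = g ^ x)
    (α : G) (h : ι → G) (m ν : ι → ℤ)
    (σj : ι → G) (hσj : ∀ j ∈ Q, σj j = (h j * α ^ (m j)) ^ x)
    (σ : G) (hσ : σ = ∏ j ∈ Q, (σj j) ^ (ν j))
    (μ : ℤ) (hμ : μ = ∑ j ∈ Q, ν j * m j) :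
    e σ g = e ((∏ j ∈ Q, (h j) ^ (ν j)) * α ^ μ) v := by
  have factor_eq (j : ι) (hj : j ∈ Q) :
      e (σj j ^ ν j) g = e ((h j * α ^ m j) ^ ν j) v := by
    rw [pairing_zpow_left e hleft, hσj j hj, hpow, ← hv, ← pairing_zpow_left e hleft]
  calc e σ g = ∏ j ∈ Q, e (σj j ^ ν j) g := by rw [hσ, pairing_prod_left e hleft]
    _ = ∏ j ∈ Q, e ((h j * α ^ m j) ^ ν j) v := prod_congr rfl factor_eq
    _ = e ((∏ j ∈ Q, h j ^ ν j) * α ^ μ) v := by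
      rw [← pairing_prod_left e hleft, prod_mul_zpow_zpow, hμ]

/-- Correctness of the verification equation for a single file. -/
theorem verification_correct {G GT : Type*} [CommGroup G] [CommGroup GT]
    (e : G → G → GT)
    (hleft : ∀ u u' w : G, e (u * u') w = e u w * e u' w)
    (hright : ∀ u w w' : G, e u (w * w') = e u w * e u w')
    (hpow : ∀ (u w : G) (a : ℤ), e (u ^ a) w = e u (w ^ a))
    {ι : Type*} (Q : Finset ι) (g : G) (x : ℤ) (v : G) (hv : v = g ^ x)
    (α : G) (h : ι → G) (m ν : ι → ℤ)
    (σj : ι → G) (hσj : ∀ j ∈ Q, σj j = (h j * α ^ (m j)) ^ x)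
    (σ : G) (hσ : σ = ∏ j ∈ Q, (σj j) ^ (ν j))
    (μ : ℤ) (hμ : μ = ∑ j ∈ Q, ν j * m j) :
    e σ g = e ((∏ j ∈ Q, (h j) ^ (ν j)) * α ^ μ) v :=
  verification_correct_general e hleft hpow Q g x v hv α h m ν σj hσj σ hσ μ hμ
end

section
/- Case I extraction identity: Let G, G_T be commutative groups with a bilinear map e satisfying e(u^a, w) = e(u,w)^a and multiplicativity in the first argument, and suppose e is non-degenerate in the sense that e(u, g) = e(u', g) implies u = u'. Let g, h ∈ G, a, β, φ, μ, μ' ∈ ℤ_p (p prime), v = g^a, α = g^β·h^φ, and suppose σ, σ' ∈ G satisfy e(σ, g) = e(P·α^μ, v) and e(σ', g) = e(P·α^{μ'}, v) for some P ∈ G. If Δ = μ' − μ and φ·Δ ≠ 0 in ℤ_p, then h^a = (σ'·σ^{-1}·v^{−βΔ})^{(φΔ)^{-1}}, where exponents are computed modulo p (G has order p). -/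
/-- Exponentiation of a group element by an element of `ZMod p`. -/
def pw {p : ℕ} {G : Type*} [Monoid G] (g : G) (a : ZMod p) : G := g ^ a.val

/-!
Since `e (σ' * σ⁻¹) g = e (α ^ Δ) v = e (α ^ (Δ a)) g`, non-degeneracy gives
`σ' σ⁻¹ = α ^ (Δ a) = v ^ (β Δ) * (h ^ a) ^ (φ Δ)`; cancelling `v ^ (β Δ)` and raising
to the power `(φ Δ)⁻¹` isolates `h ^ a`.
-/

section ZModPow

variable {p : ℕ} {G : Type*}

lemma pw_zero [Monoid G] (x : G) : pw x (0 : ZMod p) = 1 := by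
  simp [pw]

lemma pw_one [Fact (1 < p)] [Monoid G] (x : G) : pw x (1 : ZMod p) = x := by
  simp [pw, ZMod.val_one]

lemma mul_pw [CommMonoid G] (x y : G) (s : ZMod p) : pw (x * y) s = pw x s * pw y s :=
  mul_pow x y s.val

lemma pw_add [NeZero p] [Monoid G] {x : G} (hx : x ^ p = 1) (s t : ZMod p) :
    pw x (s + t) = pw x s * pw x t := by
  rw [pw, ZMod.val_add, ← pow_eq_pow_mod _ hx, pow_add]
  rfl

lemma pw_mul [Monoid G] {x : G} (hx : x ^ p = 1) (s t : ZMod p) :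
    pw x (s * t) = pw (pw x s) t := by
  rw [pw, ZMod.val_mul, ← pow_eq_pow_mod _ hx, pow_mul]
  rfl

lemma pw_neg [NeZero p] [Group G] {x : G} (hx : x ^ p = 1) (s : ZMod p) :
    pw x (-s) = (pw x s)⁻¹ :=
  eq_inv_of_mul_eq_one_left <| by rw [← pw_add hx, neg_add_cancel, pw_zero]

lemma pw_sub [NeZero p] [Group G] {x : G} (hx : x ^ p = 1) (s t : ZMod p) :
    pw x (s - t) = pw x s / pw x t := by
  rw [sub_eq_add_neg, pw_add hx, pw_neg hx, div_eq_mul_inv]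

lemma pw_pw_inv_of_ne_zero [Fact p.Prime] [Monoid G] {x : G} (hx : x ^ p = 1) {s : ZMod p}
    (hs : s ≠ 0) : pw (pw x s) s⁻¹ = x := by
  rw [← pw_mul hx, mul_inv_cancel₀ hs, pw_one]

end ZModPow

lemma map_mul_inv_of_map_mul_left {G GT : Type*} [Group G] [Group GT] {e : G → G → GT}
    (hleft : ∀ u u' w : G, e (u * u') w = e u w * e u' w) (u u' w : G) :
    e (u * u'⁻¹) w = e u w * (e u' w)⁻¹ :=
  map_mul_inv (MonoidHom.mk' (e · w) (hleft · · w)) u u'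

theorem caseI_extraction_general {p : ℕ} [Fact p.Prime] {G GT : Type*}
    [CommGroup G] [Fintype G] (hG : Fintype.card G = p) [CommGroup GT]
    (e : G → G → GT)
    (hleft : ∀ u u' w : G, e (u * u') w = e u w * e u' w)
    (hpow : ∀ (u w : G) (a : ZMod p), e (pw u a) w = pw (e u w) a)
    (hpow' : ∀ (u w : G) (a : ZMod p), e u (pw w a) = pw (e u w) a)
    (g : G) (hnd : ∀ u u' : G, e u g = e u' g → u = u')
    (h : G) (a β φ μ μ' : ZMod p)
    (v : G) (hv : v = pw g a) (α : G) (hα : α = pw g β * pw h φ)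
    (σ σ' P : G)
    (h1 : e σ g = e (P * pw α μ) v)
    (h2 : e σ' g = e (P * pw α μ') v)
    (Δ : ZMod p) (hΔ : Δ = μ' - μ) (hne : φ * Δ ≠ 0) :
    pw h a = pw (σ' * σ⁻¹ * pw v (-(β * Δ))) (φ * Δ)⁻¹ := by
  have hexp (x : G) : x ^ p = 1 := hG ▸ pow_card_eq_one
  have hquot : e (σ' * σ⁻¹) g = e (pw α (Δ * a)) g :=
    calc e (σ' * σ⁻¹) g = e (P * pw α μ' * (P * pw α μ)⁻¹) v := by
          rw [map_mul_inv_of_map_mul_left hleft, h1, h2, map_mul_inv_of_map_mul_left hleft]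
      _ = e (pw α Δ) v := by
        rw [hΔ, pw_sub (hexp α), ← div_eq_mul_inv, mul_div_mul_left_eq_div]
      _ = e (pw α (Δ * a)) g := by rw [hv, hpow', ← hpow, ← pw_mul (hexp α)]
  have hsplit : pw α (Δ * a) = pw v (β * Δ) * pw (pw h a) (φ * Δ) := by
    rw [hα, hv, mul_pw, ← pw_mul (hexp g), ← pw_mul (hexp g), ← pw_mul (hexp h),
      ← pw_mul (hexp h)]
    congr 2 <;> ring
  rw [hnd _ _ hquot, hsplit, pw_neg (hexp v), mul_inv_cancel_comm,
    pw_pw_inv_of_ne_zero (hexp _) hne]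

/-- Case I extraction identity in the security reduction. -/
theorem caseI_extraction {p : ℕ} [Fact p.Prime] {G GT : Type*}
    [CommGroup G] [Fintype G] (hG : Fintype.card G = p) [CommGroup GT]
    (e : G → G → GT)
    (hleft : ∀ u u' w : G, e (u * u') w = e u w * e u' w)
    (hright : ∀ u w w' : G, e u (w * w') = e u w * e u w')
    (hpow : ∀ (u w : G) (a : ZMod p), e (pw u a) w = pw (e u w) a)
    (hpow' : ∀ (u w : G) (a : ZMod p), e u (pw w a) = pw (e u w) a)
    (g : G) (hnd : ∀ u u' : G, e u g = e u' g → u = u')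
    (h : G) (a β φ μ μ' : ZMod p)
    (v : G) (hv : v = pw g a) (α : G) (hα : α = pw g β * pw h φ)
    (σ σ' P : G)
    (h1 : e σ g = e (P * pw α μ) v)
    (h2 : e σ' g = e (P * pw α μ') v)
    (Δ : ZMod p) (hΔ : Δ = μ' - μ) (hne : φ * Δ ≠ 0) :
    pw h a = pw (σ' * σ⁻¹ * pw v (-(β * Δ))) (φ * Δ)⁻¹ :=
  caseI_extraction_general hG e hleft hpow hpow' g hnd h a β φ μ μ' v hv α hα σ σ' P h1 h2 Δ hΔ hne
end
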